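/- arXiv:2511.11359 — 6 statements merged into one kernel-verified Lean document; each statement's English description precedes it below -/
import Mathlib

section
/- Let π₁, π₂ ∈ Δ^{n×n} be probability matrices with strictly positive entries and let c(π) = πᵀ1 denote the column-sum vector. Let q ∈ R^n have strictly positive entries and τ > 0. For families μ₁, μ₂ of n probability vectors on the 2-simplex, ⟨μ_{1,+} − μ_{2,+} − μ_{1,-} + μ_{2,-}, c(π₁) − c(π₂)⟩ ≤ (τ/2)·∑_j q_j D_KL(μ_{1,j}‖μ_{2,j}) + (2/(τ·min_i q_i))·D_KL(π₁‖π₂). -/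
/-!
Write the left side as `∑ⱼ 2 δⱼ bⱼ` with `δⱼ = μ₁₊ⱼ - μ₂₊ⱼ` and `bⱼ = c(π₁)ⱼ - c(π₂)ⱼ`, and split
each term by Young's inequality `2δb ≤ τ q_min δ² + b² / (τ q_min)`. The `δ²` terms are bounded by
binary Pinsker, `2 δⱼ² ≤ D_KL(μ₁ⱼ‖μ₂ⱼ)`, which comes from the 4-strong convexity of negative
entropy on `[0, 1]`. For the `b²` terms, `∑ bⱼ² ≤ ‖c(π₁) - c(π₂)‖₁² ≤ 2 D_KL(c(π₁)‖c(π₂))` by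
Pinsker, and passing to column sums can only decrease the divergence (log-sum inequality).
-/

open Real Finset Set

noncomputable def discreteKL {ι : Type*} [Fintype ι] (p q : ι → ℝ) : ℝ :=
  ∑ i, p i * log (p i / q i)

theorem sum_mul_log_div_sum_le {ι : Type*} (s : Finset ι) {p q : ι → ℝ}
    (hp : ∀ i ∈ s, 0 ≤ p i) (hq : ∀ i ∈ s, 0 < q i) :
    (∑ i ∈ s, p i) * log ((∑ i ∈ s, p i) / ∑ i ∈ s, q i) ≤
      ∑ i ∈ s, p i * log (p i / q i) := by
  rcases s.eq_empty_or_nonempty with rfl | hs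
  · simp
  set Q := ∑ i ∈ s, q i
  have hQ : 0 < Q := sum_pos hq hs
  -- Jensen for the convex `x ↦ x log x`, with weights `qᵢ / Q` at the points `pᵢ / qᵢ`
  have hJensen := convexOn_mul_log.map_sum_le (t := s) (w := fun i => q i / Q)
    (p := fun i => p i / q i) (fun i hi => div_nonneg (hq i hi).le hQ.le)
    (by rw [← sum_div, div_self hQ.ne'])
    (fun i hi => div_nonneg (hp i hi) (hq i hi).le)
  have hweights : ∀ i ∈ s, q i / Q * (p i / q i) = p i / Q := fun i hi => by
    field_simp [(hq i hi).ne']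
  simp only [smul_eq_mul] at hJensen
  rw [sum_congr rfl hweights, ← sum_div] at hJensen
  calc (∑ i ∈ s, p i) * log ((∑ i ∈ s, p i) / Q)
      = Q * ((∑ i ∈ s, p i) / Q * log ((∑ i ∈ s, p i) / Q)) := by field_simp
    _ ≤ Q * ∑ i ∈ s, q i / Q * (p i / q i * log (p i / q i)) := by gcongr
    _ = ∑ i ∈ s, p i * log (p i / q i) := by
      rw [mul_sum]
      exact sum_congr rfl fun i hi => by field_simp [(hq i hi).ne']

/-- `binaryKLGap b x = D_KL(x‖b) - 2 (x - b)²` for `x ∈ [0, 1]`, written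
through `binEntropy` so that it is continuous in `x` on all of `ℝ`. -/
noncomputable def binaryKLGap (b x : ℝ) : ℝ :=
  -binEntropy x - x * log b - (1 - x) * log (1 - b) - 2 * (x - b) ^ 2

theorem binaryKLGap_eq {a b : ℝ} (ha₀ : 0 ≤ a) (ha₁ : a ≤ 1) (hb₀ : 0 < b) (hb₁ : b < 1) :
    binaryKLGap b a = a * log (a / b) + (1 - a) * log ((1 - a) / (1 - b)) - 2 * (a - b) ^ 2 := by
  rcases ha₀.eq_or_lt with rfl | ha₀
  · simp [binaryKLGap]
  rcases ha₁.eq_or_lt with rfl | ha₁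
  · simp [binaryKLGap]
  rw [log_div ha₀.ne' hb₀.ne', log_div (by linarith) (by linarith)]
  simp only [binaryKLGap, binEntropy, log_inv]
  ring

theorem hasDerivAt_binaryKLGap (b : ℝ) {x : ℝ} (hx₀ : 0 < x) (hx₁ : x < 1) :
    HasDerivAt (binaryKLGap b) (log x - log (1 - x) - log b + log (1 - b) - 4 * (x - b)) x := by
  have := ((((hasDerivAt_binEntropy hx₀.ne' hx₁.ne).neg.sub
    ((hasDerivAt_id x).mul_const (log b))).sub
    (((hasDerivAt_id x).const_sub 1).mul_const (log (1 - b)))).sub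
    ((((hasDerivAt_id x).sub_const b).pow 2).const_mul 2))
  refine this.congr_deriv ?_
  simp only [id]
  ring

theorem convexOn_binaryKLGap (b : ℝ) : ConvexOn ℝ (Icc 0 1) (binaryKLGap b) := by
  refine convexOn_of_hasDerivWithinAt2_nonneg
    (f' := fun x => log x - log (1 - x) - log b + log (1 - b) - 4 * (x - b))
    (f'' := fun x => x⁻¹ + (1 - x)⁻¹ - 4) (convex_Icc 0 1)
    (by unfold binaryKLGap; fun_prop) ?_ ?_ ?_ <;> simp only [interior_Icc]
  · exact fun x ⟨hx₀, hx₁⟩ => (hasDerivAt_binaryKLGap b hx₀ hx₁).hasDerivWithinAt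
  · rintro x ⟨hx₀, hx₁⟩
    have := ((((hasDerivAt_log hx₀.ne').sub
      (((hasDerivAt_id x).const_sub 1).log (sub_ne_zero.mpr hx₁.ne'))).sub_const (log b)).add_const
      (log (1 - b))).sub (((hasDerivAt_id x).sub_const b).const_mul 4)
    refine (this.congr_deriv ?_).hasDerivWithinAt
    simp only [id]
    ring
  · rintro x ⟨hx₀, hx₁⟩
    -- this is the 4-strong convexity of negative entropy on `[0, 1]`
    have : x⁻¹ + (1 - x)⁻¹ - 4 = (1 - 2 * x) ^ 2 / (x * (1 - x)) := by
      field_simp [(by linarith : (1 - x) ≠ 0)]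
      ring
    rw [this]
    exact div_nonneg (sq_nonneg _) (mul_nonneg hx₀.le (by linarith))

theorem binary_pinsker {a a' b b' : ℝ} (ha : 0 ≤ a) (ha' : 0 ≤ a') (hab : a + a' = 1)
    (hb : 0 < b) (hb' : 0 < b') (hbb : b + b' = 1) :
    2 * (a - b) ^ 2 ≤ a * log (a / b) + a' * log (a' / b') := by
  obtain rfl : a' = 1 - a := by linarith
  obtain rfl : b' = 1 - b := by linarith
  have hmin : IsMinOn (binaryKLGap b) (Icc 0 1) b := by
    refine (convexOn_binaryKLGap b).isMinOn_of_rightDeriv_eq_zero ?_ ?_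
    · rw [interior_Icc]; exact ⟨hb, by linarith⟩
    · rw [(hasDerivAt_binaryKLGap b hb (by linarith)).hasDerivWithinAt.derivWithin
        (uniqueDiffWithinAt_Ioi b)]
      ring
  have key : binaryKLGap b b ≤ binaryKLGap b a := hmin ⟨ha, by linarith⟩
  rw [binaryKLGap_eq ha (by linarith) hb (by linarith),
    binaryKLGap_eq hb.le (by linarith) hb (by linarith)] at key
  simp only [div_self hb.ne', div_self hb'.ne', log_one] at key
  linarith

theorem pinsker {ι : Type*} [Fintype ι] {p q : ι → ℝ} (hp : ∀ i, 0 ≤ p i) (hq : ∀ i, 0 < q i)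
    (hp₁ : ∑ i, p i = 1) (hq₁ : ∑ i, q i = 1) :
    (∑ i, |p i - q i|) ^ 2 ≤ 2 * discreteKL p q := by
  classical
  -- coarse-grain onto the event `A = {q < p}` and its complement
  set A := univ.filter fun i => q i < p i
  have hpA : ∑ i ∈ A, p i + ∑ i ∈ Aᶜ, p i = 1 := by rw [sum_add_sum_compl, hp₁]
  have hqA : ∑ i ∈ A, q i + ∑ i ∈ Aᶜ, q i = 1 := by rw [sum_add_sum_compl, hq₁]
  have hl1 : ∑ i, |p i - q i| = 2 * (∑ i ∈ A, p i - ∑ i ∈ A, q i) := by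
    have hA : ∀ i ∈ A, |p i - q i| = p i - q i := fun i hi =>
      abs_of_pos (sub_pos.mpr (mem_filter.mp hi).2)
    have hAc : ∀ i ∈ Aᶜ, |p i - q i| = q i - p i := fun i hi => by
      rw [abs_sub_comm]
      exact abs_of_nonneg (sub_nonneg.mpr (not_lt.mp (by simpa [A] using hi)))
    rw [← sum_add_sum_compl A, sum_congr rfl hA, sum_congr rfl hAc, sum_sub_distrib,
      sum_sub_distrib]
    linarith
  have hcoarse : (∑ i ∈ A, p i) * log ((∑ i ∈ A, p i) / ∑ i ∈ A, q i)
      + (∑ i ∈ Aᶜ, p i) * log ((∑ i ∈ Aᶜ, p i) / ∑ i ∈ Aᶜ, q i) ≤ discreteKL p q := by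
    rw [discreteKL, ← sum_add_sum_compl A]
    exact add_le_add (sum_mul_log_div_sum_le A (fun i _ => hp i) (fun i _ => hq i))
      (sum_mul_log_div_sum_le Aᶜ (fun i _ => hp i) (fun i _ => hq i))
  have hbinary : 2 * (∑ i ∈ A, p i - ∑ i ∈ A, q i) ^ 2
      ≤ (∑ i ∈ A, p i) * log ((∑ i ∈ A, p i) / ∑ i ∈ A, q i)
        + (∑ i ∈ Aᶜ, p i) * log ((∑ i ∈ Aᶜ, p i) / ∑ i ∈ Aᶜ, q i) := by
    rcases A.eq_empty_or_nonempty with hA | hA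
    · simp [hA, hp₁, hq₁]
    rcases Aᶜ.eq_empty_or_nonempty with hAc | hAc
    · simp only [hAc, sum_empty, add_zero] at hpA hqA ⊢
      simp [hpA, hqA]
    exact binary_pinsker (sum_nonneg fun i _ => hp i) (sum_nonneg fun i _ => hp i) hpA
      (sum_pos (fun i _ => hq i) hA) (sum_pos (fun i _ => hq i) hAc) hqA
  rw [hl1]
  linarith

theorem discreteKL_colSum_le {ι κ : Type*} [Fintype ι] [Fintype κ] {P Q : ι → κ → ℝ}
    (hP : ∀ i j, 0 ≤ P i j) (hQ : ∀ i j, 0 < Q i j) :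
    discreteKL (fun j => ∑ i, P i j) (fun j => ∑ i, Q i j) ≤ ∑ i, discreteKL (P i) (Q i) := by
  simp only [discreteKL]
  rw [sum_comm]
  exact sum_le_sum fun j _ =>
    sum_mul_log_div_sum_le univ (fun i _ => hP i j) (fun i _ => hQ i j)

theorem sum_sq_colSum_sub_le {ι κ : Type*} [Fintype ι] [Nonempty ι] [Fintype κ]
    {P Q : ι → κ → ℝ} (hP : ∀ i j, 0 ≤ P i j) (hQ : ∀ i j, 0 < Q i j)
    (hP₁ : ∑ i, ∑ j, P i j = 1) (hQ₁ : ∑ i, ∑ j, Q i j = 1) :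
    ∑ j, (∑ i, P i j - ∑ i, Q i j) ^ 2 ≤ 2 * ∑ i, discreteKL (P i) (Q i) :=
  calc ∑ j, (∑ i, P i j - ∑ i, Q i j) ^ 2
      = ∑ j, |∑ i, P i j - ∑ i, Q i j| ^ 2 := by simp only [sq_abs]
    _ ≤ (∑ j, |∑ i, P i j - ∑ i, Q i j|) ^ 2 :=
      sum_sq_le_sq_sum_of_nonneg fun j _ => abs_nonneg _
    _ ≤ 2 * discreteKL (fun j => ∑ i, P i j) (fun j => ∑ i, Q i j) :=
      pinsker (fun j => sum_nonneg fun i _ => hP i j)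
        (fun j => sum_pos (fun i _ => hQ i j) univ_nonempty)
        (by rw [sum_comm, hP₁]) (by rw [sum_comm, hQ₁])
    _ ≤ 2 * ∑ i, discreteKL (P i) (Q i) := by gcongr; exact discreteKL_colSum_le hP hQ

theorem stmt_4_general (n : ℕ)
    (π1 π2 : Fin n → Fin n → ℝ)
    (hπ1 : ∀ i j, 0 < π1 i j) (hπ1s : ∑ i, ∑ j, π1 i j = 1)
    (hπ2 : ∀ i j, 0 < π2 i j) (hπ2s : ∑ i, ∑ j, π2 i j = 1)
    (q : Fin n → ℝ) (hq : ∀ i, 0 < q i) (τ : ℝ) (hτ : 0 < τ)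
    (qmin : ℝ) (hqmin : IsLeast (Set.range q) qmin)
    (μ1p μ1m μ2p μ2m : Fin n → ℝ)
    (hμ1p : ∀ j, 0 ≤ μ1p j) (hμ1m : ∀ j, 0 ≤ μ1m j) (hμ1 : ∀ j, μ1p j + μ1m j = 1)
    (hμ2p : ∀ j, 0 < μ2p j) (hμ2m : ∀ j, 0 < μ2m j) (hμ2 : ∀ j, μ2p j + μ2m j = 1) :
    ∑ j, (μ1p j - μ2p j - μ1m j + μ2m j) * ((∑ i, π1 i j) - (∑ i, π2 i j)) ≤
      τ/2 * ∑ j, q j * (μ1p j * Real.log (μ1p j / μ2p j) +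
        μ1m j * Real.log (μ1m j / μ2m j))
      + 2 / (τ * qmin) * ∑ i, ∑ j, π1 i j * Real.log (π1 i j / π2 i j) := by
  obtain ⟨⟨j₀, rfl⟩, hq_min⟩ := hqmin
  have : Nonempty (Fin n) := ⟨j₀⟩
  have hc : 0 < τ * q j₀ := mul_pos hτ (hq j₀)
  have hμ (j : Fin n) : τ * q j₀ * (μ1p j - μ2p j) ^ 2 ≤
      τ / 2 * (q j * (μ1p j * log (μ1p j / μ2p j) + μ1m j * log (μ1m j / μ2m j))) :=
    calc τ * q j₀ * (μ1p j - μ2p j) ^ 2 ≤ τ * q j * (μ1p j - μ2p j) ^ 2 := by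
          gcongr; exact hq_min ⟨j, rfl⟩
      _ = τ / 2 * (q j * (2 * (μ1p j - μ2p j) ^ 2)) := by ring
      _ ≤ _ := by
          have := hq j
          gcongr
          exact binary_pinsker (hμ1p j) (hμ1m j) (hμ1 j) (hμ2p j) (hμ2m j) (hμ2 j)
  have hcol := sum_sq_colSum_sub_le (fun i j => (hπ1 i j).le) hπ2 hπ1s hπ2s
  calc ∑ j, (μ1p j - μ2p j - μ1m j + μ2m j) * ((∑ i, π1 i j) - (∑ i, π2 i j))
      = ∑ j, 2 * (μ1p j - μ2p j) * ((∑ i, π1 i j) - (∑ i, π2 i j)) :=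
        sum_congr rfl fun j _ => by congr 1; linarith [hμ1 j, hμ2 j]
    _ ≤ ∑ j, (τ * q j₀ * (μ1p j - μ2p j) ^ 2
          + (τ * q j₀)⁻¹ * ((∑ i, π1 i j) - (∑ i, π2 i j)) ^ 2) :=
        sum_le_sum fun j _ => two_mul_le_add_mul_sq hc
    _ = ∑ j, τ * q j₀ * (μ1p j - μ2p j) ^ 2
          + (τ * q j₀)⁻¹ * ∑ j, ((∑ i, π1 i j) - (∑ i, π2 i j)) ^ 2 := by
        rw [sum_add_distrib, mul_sum]
    _ ≤ τ / 2 * ∑ j, q j * (μ1p j * log (μ1p j / μ2p j) + μ1m j * log (μ1m j / μ2m j))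
          + (τ * q j₀)⁻¹ * (2 * ∑ i, discreteKL (π1 i) (π2 i)) :=
        add_le_add ((sum_le_sum fun j _ => hμ j).trans_eq (mul_sum ..).symm)
          (mul_le_mul_of_nonneg_left hcol (inv_nonneg.mpr hc.le))
    _ = _ := by simp only [discreteKL]; ring

/-- Young's-inequality bound on the inner product of dual differences with
column-marginal differences, in terms of weighted KL divergences. -/
theorem stmt_4 (n : ℕ) (hn : 0 < n)
    (π1 π2 : Fin n → Fin n → ℝ)
    (hπ1 : ∀ i j, 0 < π1 i j) (hπ1s : ∑ i, ∑ j, π1 i j = 1)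
    (hπ2 : ∀ i j, 0 < π2 i j) (hπ2s : ∑ i, ∑ j, π2 i j = 1)
    (q : Fin n → ℝ) (hq : ∀ i, 0 < q i) (τ : ℝ) (hτ : 0 < τ)
    (qmin : ℝ) (hqmin : IsLeast (Set.range q) qmin)
    (μ1p μ1m μ2p μ2m : Fin n → ℝ)
    (hμ1p : ∀ j, 0 ≤ μ1p j) (hμ1m : ∀ j, 0 ≤ μ1m j) (hμ1 : ∀ j, μ1p j + μ1m j = 1)
    (hμ2p : ∀ j, 0 < μ2p j) (hμ2m : ∀ j, 0 < μ2m j) (hμ2 : ∀ j, μ2p j + μ2m j = 1) :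
    ∑ j, (μ1p j - μ2p j - μ1m j + μ2m j) * ((∑ i, π1 i j) - (∑ i, π2 i j)) ≤
      τ/2 * ∑ j, q j * (μ1p j * Real.log (μ1p j / μ2p j) +
        μ1m j * Real.log (μ1m j / μ2m j))
      + 2 / (τ * qmin) * ∑ i, ∑ j, π1 i j * Real.log (π1 i j / π2 i j) :=
  stmt_4_general n π1 π2 hπ1 hπ1s hπ2 hπ2s q hq τ hτ qmin hqmin μ1p μ1m μ2p μ2m hμ1p hμ1m hμ1 hμ2p
    hμ2m hμ2
end

section
/- In two dimensions, the 'balancing' operation μ̃₊ ∝ max{μ₊, e^{−β}·max{μ₊, μ₋}}, μ̃₋ ∝ max{μ₋, e^{−β}·max{μ₊, μ₋}} (renormalized to sum to 1) coincides with the Bregman (KL) projection of (μ₊, μ₋) onto the high-entropy subset Δ²_β = {(a, 1−a) : e^{−β} ≤ a/(1−a) ≤ e^{β}} of the 2-simplex. -/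
lemma grad_ineq (x t c : ℝ) (hx : 0 < x) (ht : 0 < t) (hc : 0 < c) :
    t * Real.log (t / c) + (Real.log (t / c) + 1) * (x - t) ≤ x * Real.log (x / c) := by
  have h1 : Real.log (t / x) ≤ t / x - 1 := Real.log_le_sub_one_of_pos (by positivity)
  have h2 : Real.log (t / x) = Real.log t - Real.log x := Real.log_div ht.ne' hx.ne'
  have h3 : Real.log (t / c) = Real.log t - Real.log c := Real.log_div ht.ne' hc.ne'
  have h4 : Real.log (x / c) = Real.log x - Real.log c := Real.log_div hx.ne' hc.ne'
  have h5 : x * Real.log (t / x) ≤ x * (t / x - 1) := mul_le_mul_of_nonneg_left h1 hx.le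
  have h6 : x * (t / x - 1) = t - x := by field_simp
  rw [h2, h6] at h5
  rw [h3, h4]
  nlinarith [h5]

lemma main_ineq (μp μm tp tm a : ℝ) (hμp : 0 < μp) (hμm : 0 < μm)
    (htp : 0 < tp) (htm : 0 < tm) (hts : tp + tm = 1)
    (ha : 0 < a) (ha1 : a < 1)
    (hsign : 0 ≤ (a - tp) * (Real.log (tp / μp) - Real.log (tm / μm))) :
    tp * Real.log (tp / μp) + tm * Real.log (tm / μm) ≤
      a * Real.log (a / μp) + (1 - a) * Real.log ((1 - a) / μm) := by
  have h1 := grad_ineq a tp μp ha htp hμp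
  have h2 := grad_ineq (1 - a) tm μm (by linarith) htm hμm
  have key : (Real.log (tp / μp) + 1) * (a - tp) + (Real.log (tm / μm) + 1) * ((1 - a) - tm)
      = (a - tp) * (Real.log (tp / μp) - Real.log (tm / μm)) := by
    have h : (1 - a) - tm = -(a - tp) := by linarith
    rw [h]; ring
  linarith [h1, h2, hsign, key]

set_option maxHeartbeats 2000000 in
/-- The 2D balancing operation is the KL (Bregman) projection onto the
high-entropy subset Δ²_β of the 2-simplex. -/
theorem stmt_6 (β : ℝ) (hβ : 0 < β) (μp μm : ℝ) (hμp : 0 < μp) (hμm : 0 < μm)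
    (hsum : μp + μm = 1)
    (u v tp tm : ℝ)
    (hu : u = max μp (Real.exp (-β) * max μp μm))
    (hv : v = max μm (Real.exp (-β) * max μp μm))
    (htp : tp = u / (u + v)) (htm : tm = v / (u + v)) :
    (Real.exp (-β) ≤ tp / tm ∧ tp / tm ≤ Real.exp β ∧ tp + tm = 1 ∧ 0 < tp ∧ 0 < tm) ∧
    ∀ a : ℝ, a ∈ Set.Ioo (0:ℝ) 1 →
      Real.exp (-β) ≤ a / (1 - a) → a / (1 - a) ≤ Real.exp β →
      tp * Real.log (tp / μp) + tm * Real.log (tm / μm) ≤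
        a * Real.log (a / μp) + (1 - a) * Real.log ((1 - a) / μm) := by
  have hE : 0 < Real.exp (-β) := Real.exp_pos _
  have hE1 : Real.exp (-β) < 1 := by
    rw [Real.exp_lt_one_iff]; linarith
  have hEb : Real.exp β * Real.exp (-β) = 1 := by
    rw [← Real.exp_add]; simp
  set E := Real.exp (-β) with hEdef
  set M := max μp μm with hM
  have hMp : μp ≤ M := le_max_left _ _
  have hMm : μm ≤ M := le_max_right _ _
  have hM0 : 0 < M := lt_of_lt_of_le hμp hMp
  by_cases hc1 : E * M ≤ μm
  · by_cases hc2 : E * M ≤ μp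
    · -- unclipped: u = μp, v = μm
      have hu' : u = μp := by rw [hu]; exact max_eq_left hc2
      have hv' : v = μm := by rw [hv]; exact max_eq_left hc1
      have htp' : tp = μp := by rw [htp, hu', hv', hsum, div_one]
      have htm' : tm = μm := by rw [htm, hu', hv', hsum, div_one]
      rw [htp', htm']
      constructor
      · refine ⟨?_, ?_, hsum, hμp, hμm⟩
        · rw [le_div_iff₀ hμm]
          calc E * μm ≤ E * M := by nlinarith
            _ ≤ μp := hc2
        · rw [div_le_iff₀ hμm]
          have h1 : E * μp ≤ μm := le_trans (by nlinarith) hc1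
          nlinarith [mul_le_mul_of_nonneg_left h1 (Real.exp_pos β).le]
      · intro a ha hb1 hb2
        obtain ⟨ha0, ha1⟩ := ha
        apply main_ineq μp μm μp μm a hμp hμm hμp hμm hsum ha0 ha1
        have e1 : μp / μp = 1 := div_self hμp.ne'
        have e2 : μm / μm = 1 := div_self hμm.ne'
        rw [e1, e2]
        simp
    · -- clipped: μp < E * M, so μm is the max, u = E*μm, v = μm
      push_neg at hc2
      have hle : μp ≤ μm := by
        by_contra h
        push_neg at h
        have hq : M = μp := max_eq_left h.le
        nlinarith
      have hMe : M = μm := max_eq_right hle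
      rw [hMe] at hc2
      have hu' : u = E * μm := by rw [hu, hMe]; exact max_eq_right hc2.le
      have hv' : v = μm := by rw [hv, hMe]; exact max_eq_left (by nlinarith)
      have hsumuv : u + v = μm * (E + 1) := by rw [hu', hv']; ring
      have hs0 : 0 < μm * (E + 1) := by nlinarith
      have htp' : tp = E / (E + 1) := by
        rw [htp, hsumuv, hu']
        rw [div_eq_div_iff hs0.ne' (by positivity)]
        ring
      have htm' : tm = 1 / (E + 1) := by
        rw [htm, hsumuv, hv']
        rw [div_eq_div_iff hs0.ne' (by positivity)]
        ring
      have htp0 : 0 < tp := by rw [htp']; positivity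
      have htm0 : 0 < tm := by rw [htm']; positivity
      have hts : tp + tm = 1 := by rw [htp', htm']; field_simp
      have h3 : tp = E * tm := by rw [htp', htm', mul_one_div]
      have hratio : tp / tm = E := by
        rw [h3, mul_div_assoc, div_self htm0.ne', mul_one]
      constructor
      · exact ⟨le_of_eq hratio.symm, by rw [hratio]; exact Real.exp_le_exp.mpr (by linarith),
          hts, htp0, htm0⟩
      · intro a ha hb1 hb2
        obtain ⟨ha0, ha1⟩ := ha
        apply main_ineq μp μm tp tm a hμp hμm htp0 htm0 hts ha0 ha1
        have hage : tp ≤ a := by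
          rw [le_div_iff₀ (by linarith : (0:ℝ) < 1 - a)] at hb1
          have h5 : tp * (1 + E) = E := by
            rw [htp', add_comm 1 E]
            exact div_mul_cancel₀ E (by positivity)
          refine le_of_mul_le_mul_right ?_ (by linarith : (0:ℝ) < 1 + E)
          nlinarith [hb1, h5]
        have hL : 0 ≤ Real.log (tp / μp) - Real.log (tm / μm) := by
          have l1 : Real.log (tp / μp) = Real.log tp - Real.log μp := Real.log_div htp0.ne' hμp.ne'
          have l2 : Real.log (tm / μm) = Real.log tm - Real.log μm := Real.log_div htm0.ne' hμm.ne'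
          have l3 : Real.log tp - Real.log tm = -β := by
            rw [← Real.log_div htp0.ne' htm0.ne', hratio, hEdef, Real.log_exp]
          have l4 : Real.log μp - Real.log μm ≤ -β := by
            have h6 : Real.log μp ≤ Real.log (E * μm) := Real.log_le_log hμp hc2.le
            rw [Real.log_mul hE.ne' hμm.ne', hEdef, Real.log_exp] at h6
            linarith
          linarith [l1, l2, l3, l4]
        exact mul_nonneg (by linarith) hL
  · -- clipped: μm < E * M, so μp is the max, u = μp, v = E*μp
    push_neg at hc1
    have hle : μm ≤ μp := by
      by_contra h
      push_neg at h
      have hq : M = μm := max_eq_right h.le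
      nlinarith
    have hMe : M = μp := max_eq_left hle
    rw [hMe] at hc1
    have hu' : u = μp := by rw [hu, hMe]; exact max_eq_left (by nlinarith)
    have hv' : v = E * μp := by rw [hv, hMe]; exact max_eq_right hc1.le
    have hsumuv : u + v = μp * (1 + E) := by rw [hu', hv']; ring
    have hs0 : 0 < μp * (1 + E) := by nlinarith
    have htp' : tp = 1 / (1 + E) := by
      rw [htp, hsumuv, hu']
      rw [div_eq_div_iff hs0.ne' (by positivity)]
      ring
    have htm' : tm = E / (1 + E) := by
      rw [htm, hsumuv, hv']
      rw [div_eq_div_iff hs0.ne' (by positivity)]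
      ring
    have htp0 : 0 < tp := by rw [htp']; positivity
    have htm0 : 0 < tm := by rw [htm']; positivity
    have hts : tp + tm = 1 := by rw [htp', htm']; field_simp
    have h3 : tp = Real.exp β * tm := by
      have hma : Real.exp β * (E / (1 + E)) = Real.exp β * E / (1 + E) :=
        (mul_div_assoc _ _ _).symm
      rw [htp', htm', hma, hEb]
    have hratio : tp / tm = Real.exp β := by
      rw [h3, mul_div_assoc, div_self htm0.ne', mul_one]
    constructor
    · exact ⟨by rw [hratio]; exact Real.exp_le_exp.mpr (by linarith), le_of_eq hratio,
        hts, htp0, htm0⟩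
    · intro a ha hb1 hb2
      obtain ⟨ha0, ha1⟩ := ha
      apply main_ineq μp μm tp tm a hμp hμm htp0 htm0 hts ha0 ha1
      have hale : a ≤ tp := by
        rw [div_le_iff₀ (by linarith : (0:ℝ) < 1 - a)] at hb2
        have h7 : E * (Real.exp β * (1 - a)) = 1 - a := by
          rw [← mul_assoc, mul_comm E, hEb, one_mul]
        have h6 : E * a ≤ 1 - a :=
          le_trans (mul_le_mul_of_nonneg_left hb2 hE.le) (le_of_eq h7)
        have h5 : tp * (1 + E) = 1 := by
          rw [htp']
          exact div_mul_cancel₀ 1 (by positivity)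
        refine le_of_mul_le_mul_right ?_ (by linarith : (0:ℝ) < 1 + E)
        nlinarith [h6, h5]
      have hL : Real.log (tp / μp) - Real.log (tm / μm) ≤ 0 := by
        have l1 : Real.log (tp / μp) = Real.log tp - Real.log μp := Real.log_div htp0.ne' hμp.ne'
        have l2 : Real.log (tm / μm) = Real.log tm - Real.log μm := Real.log_div htm0.ne' hμm.ne'
        have l3 : Real.log tp - Real.log tm = β := by
          rw [← Real.log_div htp0.ne' htm0.ne', hratio, Real.log_exp]
        have l4 : β ≤ Real.log μp - Real.log μm := by
          have h5 : Real.exp β * μm ≤ μp := by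
            nlinarith [mul_lt_mul_of_pos_left hc1 (Real.exp_pos β)]
          have h6 : Real.log (Real.exp β * μm) ≤ Real.log μp := Real.log_le_log (by positivity) h5
          rw [Real.log_mul (Real.exp_pos β).ne' hμm.ne', Real.log_exp] at h6
          linarith
        linarith [l1, l2, l3, l4]
      have hd : a - tp ≤ 0 := by linarith
      nlinarith [hd, hL]
end

section
/- Let r, c ∈ Δ^n and π ∈ R_{+}^{n×n}. The rounding procedure Round(π, r, c) — which scales rows by x_i = min{r_i/r(π)_i, 1}, then columns by y_j = min{c_j/c(π')_j, 1}, and finally adds the rank-one correction ‖δ_r‖₁^{−1} δ_r δ_cᵀ where δ_r = r − r(π''), δ_c = c − c(π'') — outputs a matrix π̃ ∈ Π(r,c) satisfying ‖π − π̃‖₁ ≤ 2(‖r(π) − r‖₁ + ‖c(π) − c‖₁). -/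
noncomputable def rowSum {n : ℕ} (π : Fin n → Fin n → ℝ) (i : Fin n) : ℝ := ∑ j, π i j
noncomputable def colSum {n : ℕ} (π : Fin n → Fin n → ℝ) (j : Fin n) : ℝ := ∑ i, π i j

/-- The Altschuler–Weed–Rigollet rounding procedure. -/
noncomputable def roundPlan {n : ℕ} (π : Fin n → Fin n → ℝ) (r c : Fin n → ℝ) :
    Fin n → Fin n → ℝ :=
  let π' : Fin n → Fin n → ℝ := fun i j => min (r i / rowSum π i) 1 * π i j
  let π'' : Fin n → Fin n → ℝ := fun i j => π' i j * min (c j / colSum π' j) 1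
  let δr : Fin n → ℝ := fun i => r i - rowSum π'' i
  let δc : Fin n → ℝ := fun j => c j - colSum π'' j
  fun i j => π'' i j + (∑ i', |δr i'|)⁻¹ * δr i * δc j

/-!
Row scaling lowers the row sums to `min (r i) (rowSum π i)`, and column scaling then lowers the
column sums to `min (c j) (colSum π' j)`, so `π''` lies entrywise below `π` and its marginals lie
below `r` and `c`. The two deficit vectors are therefore nonnegative, with the same total
`1 - ‖π''‖₁`, and the normalized rank-one correction restores both marginals exactly.

As `π'' ≤ π` and the correction is nonnegative, `‖π - π̃‖₁ ≤ (‖π‖₁ - ‖π''‖₁) + ‖δ_r‖₁`. The mass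
removed by row scaling is at most `‖r(π) - r‖₁`; the mass removed by column scaling plus `‖δ_c‖₁`
is exactly `‖c(π') - c‖₁`, which exceeds `‖c(π) - c‖₁` by at most the mass removed by row scaling.
-/

open Finset

variable {n : ℕ}

noncomputable def mass (π : Fin n → Fin n → ℝ) : ℝ := ∑ i, ∑ j, π i j

lemma sum_rowSum (π : Fin n → Fin n → ℝ) : ∑ i, rowSum π i = mass π := rfl

lemma sum_colSum (π : Fin n → Fin n → ℝ) : ∑ j, colSum π j = mass π := sum_comm

lemma min_div_mul_eq_min {a s : ℝ} (ha : 0 ≤ a) (hs : 0 ≤ s) : min (a / s) 1 * s = min a s := by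
  rcases hs.eq_or_lt with rfl | hs
  · simp [ha]
  · rcases le_total a s with has | has
    · rw [min_eq_left ((div_le_one hs).mpr has), div_mul_cancel₀ _ hs.ne', min_eq_left has]
    · rw [min_eq_right ((one_le_div hs).mpr has), one_mul, min_eq_right has]

section Scaling

noncomputable def rowScale (π : Fin n → Fin n → ℝ) (r : Fin n → ℝ) (i j : Fin n) : ℝ :=
  min (r i / rowSum π i) 1 * π i j

noncomputable def colScale (π : Fin n → Fin n → ℝ) (c : Fin n → ℝ) (i j : Fin n) : ℝ :=
  π i j * min (c j / colSum π j) 1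

variable {π : Fin n → Fin n → ℝ} {r c : Fin n → ℝ}

lemma rowSum_nonneg (hπ : ∀ i j, 0 ≤ π i j) (i : Fin n) : 0 ≤ rowSum π i :=
  sum_nonneg fun j _ => hπ i j

lemma colSum_nonneg (hπ : ∀ i j, 0 ≤ π i j) (j : Fin n) : 0 ≤ colSum π j :=
  sum_nonneg fun i _ => hπ i j

lemma rowScale_nonneg (hπ : ∀ i j, 0 ≤ π i j) (hr : ∀ i, 0 ≤ r i) (i j : Fin n) :
    0 ≤ rowScale π r i j :=
  mul_nonneg (le_min (div_nonneg (hr i) (rowSum_nonneg hπ i)) zero_le_one) (hπ i j)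

lemma colScale_nonneg (hπ : ∀ i j, 0 ≤ π i j) (hc : ∀ j, 0 ≤ c j) (i j : Fin n) :
    0 ≤ colScale π c i j :=
  mul_nonneg (hπ i j) (le_min (div_nonneg (hc j) (colSum_nonneg hπ j)) zero_le_one)

lemma rowScale_le (hπ : ∀ i j, 0 ≤ π i j) (i j : Fin n) : rowScale π r i j ≤ π i j :=
  mul_le_of_le_one_left (hπ i j) (min_le_right _ _)

lemma colScale_le (hπ : ∀ i j, 0 ≤ π i j) (i j : Fin n) : colScale π c i j ≤ π i j :=
  mul_le_of_le_one_right (hπ i j) (min_le_right _ _)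

lemma rowSum_rowScale (hπ : ∀ i j, 0 ≤ π i j) (hr : ∀ i, 0 ≤ r i) (i : Fin n) :
    rowSum (rowScale π r) i = min (r i) (rowSum π i) := by
  simp only [rowSum, rowScale]
  rw [← mul_sum]
  exact min_div_mul_eq_min (hr i) (rowSum_nonneg hπ i)

lemma colSum_colScale (hπ : ∀ i j, 0 ≤ π i j) (hc : ∀ j, 0 ≤ c j) (j : Fin n) :
    colSum (colScale π c) j = min (c j) (colSum π j) := by
  simp only [colSum, colScale]
  rw [← sum_mul, mul_comm]
  exact min_div_mul_eq_min (hc j) (colSum_nonneg hπ j)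

lemma mass_sub_mass_rowScale_le (hπ : ∀ i j, 0 ≤ π i j) (hr : ∀ i, 0 ≤ r i) :
    mass π - mass (rowScale π r) ≤ ∑ i, |rowSum π i - r i| := by
  rw [← sum_rowSum, ← sum_rowSum, ← sum_sub_distrib]
  refine sum_le_sum fun i _ => ?_
  rw [rowSum_rowScale hπ hr, ← max_sub_min_eq_abs']
  linarith [le_max_left (rowSum π i) (r i), min_comm (r i) (rowSum π i)]

lemma mass_sub_mass_colScale_add (hπ : ∀ i j, 0 ≤ π i j) (hc : ∀ j, 0 ≤ c j) :
    (mass π - mass (colScale π c)) + (∑ j, c j - mass (colScale π c)) =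
      ∑ j, |colSum π j - c j| := by
  rw [← sum_colSum, ← sum_colSum, ← sum_sub_distrib, ← sum_sub_distrib, ← sum_add_distrib]
  refine sum_congr rfl fun j _ => ?_
  rw [colSum_colScale hπ hc, ← max_sub_min_eq_abs']
  linarith [min_add_max (c j) (colSum π j), min_comm (c j) (colSum π j),
    max_comm (c j) (colSum π j)]

end Scaling

lemma sum_abs_colSum_sub_le {P π : Fin n → Fin n → ℝ} (hP : ∀ i j, P i j ≤ π i j)
    (c : Fin n → ℝ) :
    ∑ j, |colSum P j - c j| ≤ ∑ j, |colSum π j - c j| + (mass π - mass P) := by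
  rw [← sum_colSum, ← sum_colSum, ← sum_sub_distrib, ← sum_add_distrib]
  refine sum_le_sum fun j _ => ?_
  have hPπ : colSum P j ≤ colSum π j := sum_le_sum fun i _ => hP i j
  have := abs_sub_le (colSum P j) (colSum π j) (c j)
  rw [abs_sub_comm (colSum P j) (colSum π j), abs_of_nonneg (sub_nonneg.mpr hPπ)] at this
  linarith

section NormalizedOuter

/-- `‖u‖₁⁻¹ u vᵀ`; for `u = 0` the junk value `0⁻¹ = 0` makes it the zero matrix. -/
noncomputable def normalizedOuter (u v : Fin n → ℝ) (i j : Fin n) : ℝ :=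
  (∑ k, |u k|)⁻¹ * u i * v j

variable {u v : Fin n → ℝ}

lemma normalizedOuter_nonneg (hu : ∀ i, 0 ≤ u i) (hv : ∀ j, 0 ≤ v j) (i j : Fin n) :
    0 ≤ normalizedOuter u v i j :=
  mul_nonneg (mul_nonneg (inv_nonneg.mpr (sum_nonneg fun _ _ => abs_nonneg _)) (hu i)) (hv j)

lemma sum_abs_eq_sum (hu : ∀ i, 0 ≤ u i) : ∑ k, |u k| = ∑ k, u k :=
  sum_congr rfl fun k _ => abs_of_nonneg (hu k)

lemma rowSum_normalizedOuter (hu : ∀ i, 0 ≤ u i) (huv : ∑ i, u i = ∑ j, v j) (i : Fin n) :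
    rowSum (normalizedOuter u v) i = u i := by
  simp only [rowSum, normalizedOuter]
  rw [← mul_sum, ← huv, ← sum_abs_eq_sum hu]
  rcases eq_or_ne (∑ k, |u k|) 0 with hs | hs
  · have hui : u i = 0 := abs_eq_zero.mp
      ((sum_eq_zero_iff_of_nonneg fun k _ => abs_nonneg (u k)).mp hs i (mem_univ i))
    simp [hui]
  · field_simp

lemma colSum_normalizedOuter (hu : ∀ i, 0 ≤ u i) (hv : ∀ j, 0 ≤ v j)
    (huv : ∑ i, u i = ∑ j, v j) (j : Fin n) :
    colSum (normalizedOuter u v) j = v j := by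
  simp only [colSum, normalizedOuter]
  rw [← sum_mul, ← mul_sum, ← sum_abs_eq_sum hu]
  rcases eq_or_ne (∑ k, |u k|) 0 with hs | hs
  · have hvj : v j = 0 := (sum_eq_zero_iff_of_nonneg fun k _ => hv k).mp
      (by rw [← huv, ← sum_abs_eq_sum hu, hs]) j (mem_univ j)
    simp [hvj]
  · field_simp

lemma mass_normalizedOuter (hu : ∀ i, 0 ≤ u i) (huv : ∑ i, u i = ∑ j, v j) :
    mass (normalizedOuter u v) = ∑ i, u i := by
  rw [← sum_rowSum]
  exact sum_congr rfl fun i _ => rowSum_normalizedOuter hu huv i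

end NormalizedOuter

section FillDeficits

noncomputable def fillDeficits (P : Fin n → Fin n → ℝ) (r c : Fin n → ℝ) (i j : Fin n) : ℝ :=
  P i j + normalizedOuter (fun i => r i - rowSum P i) (fun j => c j - colSum P j) i j

variable {P : Fin n → Fin n → ℝ} {r c : Fin n → ℝ}

lemma sum_rowDeficit_eq_sum_colDeficit (hrc : ∑ i, r i = ∑ j, c j) :
    ∑ i, (r i - rowSum P i) = ∑ j, (c j - colSum P j) := by
  rw [sum_sub_distrib, sum_sub_distrib, sum_rowSum, sum_colSum, hrc]

lemma fillDeficits_nonneg (hP : ∀ i j, 0 ≤ P i j) (hPr : ∀ i, rowSum P i ≤ r i)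
    (hPc : ∀ j, colSum P j ≤ c j) (i j : Fin n) : 0 ≤ fillDeficits P r c i j :=
  add_nonneg (hP i j)
    (normalizedOuter_nonneg (fun i => sub_nonneg.mpr (hPr i)) (fun j => sub_nonneg.mpr (hPc j)) i j)

lemma rowSum_fillDeficits (hPr : ∀ i, rowSum P i ≤ r i) (hrc : ∑ i, r i = ∑ j, c j)
    (i : Fin n) : rowSum (fillDeficits P r c) i = r i := by
  have h := rowSum_normalizedOuter (fun i => sub_nonneg.mpr (hPr i))
    (sum_rowDeficit_eq_sum_colDeficit hrc) i
  simp only [rowSum, fillDeficits, sum_add_distrib] at h ⊢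
  rw [h]
  ring

lemma colSum_fillDeficits (hPr : ∀ i, rowSum P i ≤ r i) (hPc : ∀ j, colSum P j ≤ c j)
    (hrc : ∑ i, r i = ∑ j, c j) (j : Fin n) : colSum (fillDeficits P r c) j = c j := by
  have h := colSum_normalizedOuter (fun i => sub_nonneg.mpr (hPr i))
    (fun j => sub_nonneg.mpr (hPc j)) (sum_rowDeficit_eq_sum_colDeficit hrc) j
  simp only [colSum, fillDeficits, sum_add_distrib] at h ⊢
  rw [h]
  ring

lemma sum_abs_sub_fillDeficits_le {π : Fin n → Fin n → ℝ} (hPπ : ∀ i j, P i j ≤ π i j)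
    (hPr : ∀ i, rowSum P i ≤ r i) (hPc : ∀ j, colSum P j ≤ c j) (hrc : ∑ i, r i = ∑ j, c j) :
    ∑ i, ∑ j, |π i j - fillDeficits P r c i j| ≤ (mass π - mass P) + (∑ i, r i - mass P) := by
  set E := normalizedOuter (fun i => r i - rowSum P i) (fun j => c j - colSum P j)
  have hE : ∀ i j, 0 ≤ E i j :=
    normalizedOuter_nonneg (fun i => sub_nonneg.mpr (hPr i)) (fun j => sub_nonneg.mpr (hPc j))
  have hmassE : mass E = ∑ i, r i - mass P := by
    rw [mass_normalizedOuter (fun i => sub_nonneg.mpr (hPr i))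
      (sum_rowDeficit_eq_sum_colDeficit hrc), sum_sub_distrib, sum_rowSum]
  calc ∑ i, ∑ j, |π i j - fillDeficits P r c i j|
      ≤ ∑ i, ∑ j, ((π i j - P i j) + E i j) := by
        refine sum_le_sum fun i _ => sum_le_sum fun j _ => ?_
        have := abs_sub (π i j - P i j) (E i j)
        rw [abs_of_nonneg (sub_nonneg.mpr (hPπ i j)), abs_of_nonneg (hE i j),
          sub_sub] at this
        exact this
    _ = (mass π - mass P) + mass E := by
        simp only [mass, sum_add_distrib, sum_sub_distrib]
    _ = (mass π - mass P) + (∑ i, r i - mass P) := by rw [hmassE]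

end FillDeficits

lemma roundPlan_eq_fillDeficits (π : Fin n → Fin n → ℝ) (r c : Fin n → ℝ) :
    roundPlan π r c = fillDeficits (colScale (rowScale π r) c) r c := rfl

/-- Rounding lemma (Altschuler–Weed–Rigollet): `roundPlan π r c` is a coupling of
`(r, c)` and is ℓ1-close to `π`. -/
theorem stmt_8 (n : ℕ) (π : Fin n → Fin n → ℝ) (hπ : ∀ i j, 0 ≤ π i j)
    (r c : Fin n → ℝ) (hr0 : ∀ i, 0 ≤ r i) (hr1 : ∑ i, r i = 1)
    (hc0 : ∀ j, 0 ≤ c j) (hc1 : ∑ j, c j = 1) :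
    (∀ i j, 0 ≤ roundPlan π r c i j) ∧
    (∀ i, rowSum (roundPlan π r c) i = r i) ∧
    (∀ j, colSum (roundPlan π r c) j = c j) ∧
    (∑ i, ∑ j, |π i j - roundPlan π r c i j|) ≤
      2 * ((∑ i, |rowSum π i - r i|) + ∑ j, |colSum π j - c j|) := by
  rw [roundPlan_eq_fillDeficits]
  set π' := rowScale π r
  set P := colScale π' c
  have hπ'0 : ∀ i j, 0 ≤ π' i j := rowScale_nonneg hπ hr0
  have hPπ' : ∀ i j, P i j ≤ π' i j := colScale_le hπ'0
  have hPr : ∀ i, rowSum P i ≤ r i := fun i =>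
    (sum_le_sum fun j _ => hPπ' i j).trans ((rowSum_rowScale hπ hr0 i).trans_le (min_le_left _ _))
  have hPc : ∀ j, colSum P j ≤ c j := fun j =>
    (colSum_colScale hπ'0 hc0 j).trans_le (min_le_left _ _)
  have hrc : ∑ i, r i = ∑ j, c j := hr1.trans hc1.symm
  refine ⟨fillDeficits_nonneg (colScale_nonneg hπ'0 hc0) hPr hPc, rowSum_fillDeficits hPr hrc,
    colSum_fillDeficits hPr hPc hrc, ?_⟩
  have hcol := mass_sub_mass_colScale_add hπ'0 hc0
  calc ∑ i, ∑ j, |π i j - fillDeficits P r c i j|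
      ≤ (mass π - mass P) + (∑ i, r i - mass P) :=
        sum_abs_sub_fillDeficits_le (fun i j => (hPπ' i j).trans (rowScale_le hπ i j)) hPr hPc hrc
    _ = (mass π - mass π') + ∑ j, |colSum π' j - c j| := by rw [← hcol, hrc]; ring
    _ ≤ 2 * ((∑ i, |rowSum π i - r i|) + ∑ j, |colSum π j - c j|) := by
        linarith [mass_sub_mass_rowScale_le hπ hr0,
          sum_abs_colSum_sub_le (rowScale_le (r := r) hπ) c,
          sum_nonneg fun j (_ : j ∈ univ) => abs_nonneg (colSum π j - c j)]
end

section
/- The optimal value and optimizers of the OT problem min_{π ∈ Π(r,c)} ⟨C, π⟩ coincide with those of the penalized problem min_{p row-stochastic} ⟨D_r p, C⟩ + 2‖C‖_∞‖c(D_r p) − c‖₁ under the bijection π = D_r p (on indices i with r_i > 0): if π* is OT-optimal then p* with p*_{ij} = π*_{ij}/r_i (and 0 when r_i = 0) is penalized-optimal, and conversely any feasible penalized optimizer p* yields an OT-optimal π* = D_r p*. -/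
lemma round_aux (n : ℕ) (C : Fin n → Fin n → ℝ) (hC : ∀ i j, 0 ≤ C i j)
    (Cinf : ℝ) (hub : ∀ i j, C i j ≤ Cinf) (hCinf0 : 0 ≤ Cinf)
    (r c : Fin n → ℝ) (hr0 : ∀ i, 0 ≤ r i) (hr1 : ∑ i, r i = 1)
    (hc0 : ∀ j, 0 ≤ c j) (hc1 : ∑ j, c j = 1)
    (π : Fin n → Fin n → ℝ) (hπ0 : ∀ i j, 0 ≤ π i j) (hrow : ∀ i, ∑ j, π i j = r i) :
    ∃ π' : Fin n → Fin n → ℝ, (∀ i j, 0 ≤ π' i j) ∧ (∀ i, ∑ j, π' i j = r i) ∧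
      (∀ j, ∑ i, π' i j = c j) ∧
      (∑ i, ∑ j, C i j * π' i j) ≤
        (∑ i, ∑ j, C i j * π i j) + Cinf * ∑ j, |(∑ i, π i j) - c j| := by
  set cp : Fin n → ℝ := fun j => ∑ i, π i j with hcp
  have hcp0 : ∀ j, 0 ≤ cp j := fun j => Finset.sum_nonneg fun i _ => hπ0 i j
  set scale : Fin n → ℝ := fun j => if cp j = 0 then 0 else min 1 (c j / cp j) with hscale
  have hs0 : ∀ j, 0 ≤ scale j := by
    intro j; by_cases h : cp j = 0
    · simp [hscale, h]
    · simp only [hscale, h, if_false]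
      exact le_min zero_le_one (div_nonneg (hc0 j) (hcp0 j))
  have hs1 : ∀ j, scale j ≤ 1 := by
    intro j; by_cases h : cp j = 0 <;> simp [hscale, h]
  set π2 : Fin n → Fin n → ℝ := fun i j => π i j * scale j with hπ2
  have hπ2le : ∀ i j, π2 i j ≤ π i j := fun i j =>
    mul_le_of_le_one_right (hπ0 i j) (hs1 j)
  have hπ20 : ∀ i j, 0 ≤ π2 i j := fun i j => mul_nonneg (hπ0 i j) (hs0 j)
  have hcol2 : ∀ j, ∑ i, π2 i j = min (cp j) (c j) := by
    intro j
    have h0 : ∑ i, π2 i j = cp j * scale j := by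
      rw [hcp]; rw [← Finset.sum_mul]
    rw [h0]
    by_cases h : cp j = 0
    · rw [h]; simp [min_eq_left (hc0 j)]
    · have hpos : 0 < cp j := lt_of_le_of_ne (hcp0 j) (Ne.symm h)
      simp only [hscale, h, if_false]
      rw [mul_min_of_nonneg _ _ (le_of_lt hpos), mul_one, mul_div_cancel₀ _ h]
  set u : Fin n → ℝ := fun i => r i - ∑ j, π2 i j with hu
  set v : Fin n → ℝ := fun j => c j - min (cp j) (c j) with hv
  have hu0 : ∀ i, 0 ≤ u i := by
    intro i
    have : ∑ j, π2 i j ≤ ∑ j, π i j := Finset.sum_le_sum fun j _ => hπ2le i j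
    simp only [hu]; linarith [hrow i]
  have hv0 : ∀ j, 0 ≤ v j := fun j => by simp [hv]
  set Δ : ℝ := ∑ j, v j with hΔ
  have hΔ0 : 0 ≤ Δ := Finset.sum_nonneg fun j _ => hv0 j
  have hΔu : ∑ i, u i = Δ := by
    have h1 : ∑ i, u i = 1 - ∑ i, ∑ j, π2 i j := by
      simp [hu, Finset.sum_sub_distrib, hr1]
    have h2 : ∑ i, ∑ j, π2 i j = ∑ j, min (cp j) (c j) := by
      rw [Finset.sum_comm]; exact Finset.sum_congr rfl fun j _ => hcol2 j
    have h3 : Δ = 1 - ∑ j, min (cp j) (c j) := by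
      simp [hΔ, hv, Finset.sum_sub_distrib, hc1]
    rw [h1, h2, h3]
  have hvabs : ∀ j, v j ≤ |cp j - c j| := by
    intro j
    show c j - min (cp j) (c j) ≤ |cp j - c j|
    rcases min_cases (cp j) (c j) with ⟨he, _⟩ | ⟨he, _⟩
    · rw [he, abs_sub_comm]; exact le_abs_self _
    · rw [he]; simp
  have hΔabs : Δ ≤ ∑ j, |cp j - c j| := Finset.sum_le_sum fun j _ => hvabs j
  have habs0 : 0 ≤ ∑ j, |cp j - c j| := Finset.sum_nonneg fun j _ => abs_nonneg _
  have hcost2 : (∑ i, ∑ j, C i j * π2 i j) ≤ ∑ i, ∑ j, C i j * π i j :=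
    Finset.sum_le_sum fun i _ => Finset.sum_le_sum fun j _ =>
      mul_le_mul_of_nonneg_left (hπ2le i j) (hC i j)
  rcases eq_or_lt_of_le hΔ0 with hz | hpos
  · have hvz : ∀ j, v j = 0 := fun j =>
      (Finset.sum_eq_zero_iff_of_nonneg (fun j _ => hv0 j)).mp hz.symm j (Finset.mem_univ j)
    have huz : ∀ i, u i = 0 := fun i =>
      (Finset.sum_eq_zero_iff_of_nonneg (fun i _ => hu0 i)).mp (hΔu.trans hz.symm) i
        (Finset.mem_univ i)
    refine ⟨π2, hπ20, ?_, ?_, ?_⟩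
    · intro i; have := huz i; simp only [hu] at this; linarith
    · intro j; rw [hcol2 j]; have := hvz j; simp only [hv] at this; linarith
    · nlinarith [mul_nonneg hCinf0 habs0]
  · set π' : Fin n → Fin n → ℝ := fun i j => π2 i j + u i * v j / Δ with hπ'
    have hne : Δ ≠ 0 := ne_of_gt hpos
    refine ⟨π', ?_, ?_, ?_, ?_⟩
    · intro i j
      have h1 : 0 ≤ u i * v j / Δ := div_nonneg (mul_nonneg (hu0 i) (hv0 j)) hΔ0
      simp only [hπ']; linarith [hπ20 i j]
    · intro i
      have h1 : (∑ j, u i * v j / Δ) = u i := by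
        rw [← Finset.sum_div, ← Finset.mul_sum, ← hΔ, mul_div_assoc, div_self hne, mul_one]
      simp only [hπ', Finset.sum_add_distrib, h1]
      simp [hu]
    · intro j
      have h1 : (∑ i, u i * v j / Δ) = v j := by
        rw [← Finset.sum_div, ← Finset.sum_mul, hΔu, mul_comm, mul_div_assoc, div_self hne,
          mul_one]
      simp only [hπ', Finset.sum_add_distrib, h1, hcol2 j]
      simp [hv]
    · have hsplit : (∑ i, ∑ j, C i j * π' i j) =
          (∑ i, ∑ j, C i j * π2 i j) + ∑ i, ∑ j, C i j * (u i * v j / Δ) := by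
        simp only [hπ', mul_add, Finset.sum_add_distrib]
      have hsumuv : (∑ i, ∑ j, u i * v j / Δ) = Δ := by
        simp_rw [mul_div_assoc, ← Finset.mul_sum, ← Finset.sum_mul, ← Finset.sum_div, ← hΔ,
          hΔu]
        field_simp
      have hextra : (∑ i, ∑ j, C i j * (u i * v j / Δ)) ≤ Cinf * Δ := by
        have h1 : (∑ i, ∑ j, C i j * (u i * v j / Δ)) ≤
            ∑ i, ∑ j, Cinf * (u i * v j / Δ) :=
          Finset.sum_le_sum fun i _ => Finset.sum_le_sum fun j _ =>
            mul_le_mul_of_nonneg_right (hub i j)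
              (div_nonneg (mul_nonneg (hu0 i) (hv0 j)) hΔ0)
        have h2 : (∑ i, ∑ j, Cinf * (u i * v j / Δ)) = Cinf * Δ := by
          simp_rw [← Finset.mul_sum]; rw [hsumuv]
        linarith
      rw [hsplit]
      have := mul_le_mul_of_nonneg_left hΔabs hCinf0
      linarith

/-- Equivalence of the OT problem and its ℓ1-penalized reformulation under the
bijection π = D_r p. -/
theorem stmt_10 (n : ℕ) (C : Fin n → Fin n → ℝ) (hC : ∀ i j, 0 ≤ C i j)
    (Cinf : ℝ) (hCinf : IsGreatest (Set.range fun p : Fin n × Fin n => |C p.1 p.2|) Cinf)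
    (r c : Fin n → ℝ) (hr0 : ∀ i, 0 ≤ r i) (hr1 : ∑ i, r i = 1)
    (hc0 : ∀ j, 0 ≤ c j) (hc1 : ∑ j, c j = 1)
    (F : (Fin n → Fin n → ℝ) → ℝ)
    (hF : ∀ π, F π = (∑ i, ∑ j, C i j * π i j) +
      2 * Cinf * ∑ j, |(∑ i, π i j) - c j|) :
    -- Forward direction: an OT optimizer induces a penalized optimizer.
    (∀ πstar : Fin n → Fin n → ℝ,
      (∀ i j, 0 ≤ πstar i j) → (∀ i, ∑ j, πstar i j = r i) → (∀ j, ∑ i, πstar i j = c j) →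
      (∀ π : Fin n → Fin n → ℝ, (∀ i j, 0 ≤ π i j) → (∀ i, ∑ j, π i j = r i) →
        (∀ j, ∑ i, π i j = c j) →
        (∑ i, ∑ j, C i j * πstar i j) ≤ ∑ i, ∑ j, C i j * π i j) →
      ∀ p : Fin n → Fin n → ℝ, (∀ i j, 0 ≤ p i j) → (∀ i, ∑ j, p i j = 1) →
        F (fun i j => r i * (if 0 < r i then πstar i j / r i else 0)) ≤
          F (fun i j => r i * p i j)) ∧
    -- Converse: a feasible penalized optimizer induces an OT optimizer.
    (∀ pstar : Fin n → Fin n → ℝ,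
      (∀ i j, 0 ≤ pstar i j) → (∀ i, ∑ j, pstar i j = 1) →
      (∀ j, ∑ i, r i * pstar i j = c j) →
      (∀ p : Fin n → Fin n → ℝ, (∀ i j, 0 ≤ p i j) → (∀ i, ∑ j, p i j = 1) →
        F (fun i j => r i * pstar i j) ≤ F (fun i j => r i * p i j)) →
      ∀ π : Fin n → Fin n → ℝ, (∀ i j, 0 ≤ π i j) → (∀ i, ∑ j, π i j = r i) →
        (∀ j, ∑ i, π i j = c j) →
        (∑ i, ∑ j, C i j * (r i * pstar i j)) ≤ ∑ i, ∑ j, C i j * π i j) := by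
  have hn : 0 < n := by
    rcases Nat.eq_zero_or_pos n with h | h
    · subst h; simp at hr1
    · exact h
  have hub : ∀ i j, C i j ≤ Cinf := fun i j =>
    le_trans (le_abs_self _) (hCinf.2 ⟨(i, j), rfl⟩)
  have hCinf0 : 0 ≤ Cinf := by
    obtain ⟨p, hp⟩ := hCinf.1
    rw [← hp]; exact abs_nonneg _
  -- zero rows of a plan with row sums r vanish when r i = 0
  have hzero : ∀ (π : Fin n → Fin n → ℝ), (∀ i j, 0 ≤ π i j) → (∀ i, ∑ j, π i j = r i) →
      ∀ i, r i = 0 → ∀ j, π i j = 0 := by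
    intro π h0 hrow i hri j
    have hs : ∑ j, π i j = 0 := by rw [hrow i, hri]
    exact (Finset.sum_eq_zero_iff_of_nonneg (fun j _ => h0 i j)).mp hs j (Finset.mem_univ j)
  constructor
  · -- forward
    intro πstar hπs0 hπsrow hπscol hopt p hp0 hp1
    have heq : (fun i j => r i * (if 0 < r i then πstar i j / r i else 0)) = πstar := by
      funext i j
      by_cases hri : 0 < r i
      · simp only [hri, if_true]
        field_simp
      · have hri0 : r i = 0 := le_antisymm (not_lt.mp hri) (hr0 i)
        simp [hri, hri0, hzero πstar hπs0 hπsrow i hri0 j]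
    rw [heq]
    have hFstar : F πstar = ∑ i, ∑ j, C i j * πstar i j := by
      rw [hF]
      have : ∀ j, |(∑ i, πstar i j) - c j| = 0 := by
        intro j; rw [hπscol j]; simp
      simp [this]
    -- round D_r p
    have hrowp : ∀ i, ∑ j, r i * p i j = r i := by
      intro i; rw [← Finset.mul_sum, hp1 i, mul_one]
    have hp0' : ∀ i j, 0 ≤ r i * p i j := fun i j => mul_nonneg (hr0 i) (hp0 i j)
    obtain ⟨π', hπ'0, hπ'row, hπ'col, hπ'cost⟩ :=
      round_aux n C hC Cinf hub hCinf0 r c hr0 hr1 hc0 hc1 _ hp0' hrowp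
    have h1 : (∑ i, ∑ j, C i j * πstar i j) ≤ ∑ i, ∑ j, C i j * π' i j :=
      hopt π' hπ'0 hπ'row hπ'col
    rw [hFstar, hF]
    have habs0 : 0 ≤ ∑ j, |(∑ i, r i * p i j) - c j| :=
      Finset.sum_nonneg fun j _ => abs_nonneg _
    nlinarith [mul_nonneg hCinf0 habs0]
  · -- converse
    intro pstar hps0 hps1 hpscol hopt π hπ0 hπrow hπcol
    set p : Fin n → Fin n → ℝ := fun i j =>
      if 0 < r i then π i j / r i else if j = ⟨0, hn⟩ then 1 else 0 with hp
    have hp0 : ∀ i j, 0 ≤ p i j := by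
      intro i j
      by_cases hri : 0 < r i
      · simp only [hp, hri, if_true]; exact div_nonneg (hπ0 i j) (hr0 i)
      · simp only [hp, hri, if_false]; split <;> norm_num
    have hp1 : ∀ i, ∑ j, p i j = 1 := by
      intro i
      by_cases hri : 0 < r i
      · simp only [hp, hri, if_true]
        rw [← Finset.sum_div, hπrow i, div_self (ne_of_gt hri)]
      · simp only [hp, hri, if_false]
        simp
    have hDrp : ∀ i j, r i * p i j = π i j := by
      intro i j
      by_cases hri : 0 < r i
      · simp only [hp, hri, if_true]
        field_simp
      · have hri0 : r i = 0 := le_antisymm (not_lt.mp hri) (hr0 i)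
        rw [hri0, zero_mul, hzero π hπ0 hπrow i hri0 j]
    have hkey := hopt p hp0 hp1
    rw [hF, hF] at hkey
    have e1 : ∀ j, |(∑ i, r i * pstar i j) - c j| = 0 := by
      intro j; rw [hpscol j]; simp
    have e2 : ∀ j, |(∑ i, r i * p i j) - c j| = 0 := by
      intro j
      have : ∑ i, r i * p i j = c j := by
        rw [← hπcol j]; exact Finset.sum_congr rfl fun i _ => hDrp i j
      rw [this]; simp
    simp only [e1, e2, Finset.sum_const_zero, mul_zero, add_zero] at hkey
    calc (∑ i, ∑ j, C i j * (r i * pstar i j)) ≤ ∑ i, ∑ j, C i j * (r i * p i j) := hkey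
      _ = ∑ i, ∑ j, C i j * π i j :=
        Finset.sum_congr rfl fun i _ => Finset.sum_congr rfl fun j _ => by rw [hDrp i j]
end

section
/- There exists an optimal solution (φ*, ψ*) to the entropic OT dual max_{φ,ψ} ⟨φ,r⟩ + ⟨ψ,c⟩ − η·LSE_{ij}(−(C_{ij} − φ_i − ψ_j)/η) satisfying ‖φ*‖_∞ ≤ ‖C‖_∞ − η·log(min_i r_i) and ‖ψ*‖_∞ ≤ ‖C‖_∞ − η·log(min_j c_j). -/
/-!
The dual `d` is invariant under `(φ, ψ) ↦ (φ + t, ψ - t)`, and for fixed `ψ` it is maximised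
exactly in `φ` by the Sinkhorn half-step `φ i = η log (r i / ∑ j, exp ((ψ j - C i j) / η))`
(Gibbs' inequality). Shifting `ψ` first so that `∑ j, exp (ψ j / η) = 1`, the bounds
`0 ≤ C ≤ ‖C‖_∞` put this `φ i` in `[η log r i, η log r i + ‖C‖_∞]`; the following exact
maximisation in `ψ` then lands in `[η log c j - ‖C‖_∞, η log c j + ‖C‖_∞]`. So every point is
dominated by a point of a compact box, and a maximiser of the continuous dual over that box
is a global maximiser.
-/

open Real Finset

variable {ι κ : Type*}

theorem abs_le_sub_of_mem_Icc {a s M x : ℝ} (ha : a ≤ 0) (hs : 0 ≤ s ∧ s ≤ M)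
    (hx : a - s ≤ x ∧ x ≤ a - s + M) : |x| ≤ M - a :=
  abs_le.mpr ⟨by linarith, by linarith⟩

theorem mul_log_nonpos_of_sum_eq_one [Fintype ι] {η : ℝ} {r : ι → ℝ} (hη : 0 < η)
    (hr : ∀ i, 0 < r i) (hr1 : ∑ i, r i = 1) (i : ι) : η * log (r i) ≤ 0 :=
  mul_nonpos_of_nonneg_of_nonpos hη.le <| log_nonpos (hr i).le <|
    hr1 ▸ single_le_sum (fun j _ => (hr j).le) (mem_univ i)

theorem isCompact_setOf_forall_abs_le (R : ℝ) : IsCompact {x : ι → ℝ | ∀ i, |x i| ≤ R} := by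
  convert isCompact_univ_pi fun _ : ι => isCompact_Icc (a := -R) (b := R)
  ext x
  simp only [Set.mem_ofPred_eq, Set.mem_pi, Set.mem_univ, Set.mem_Icc, abs_le, true_imp_iff]

-- Gibbs' variational inequality; equality holds at `u i = η * log (w i / a i)`.
theorem sum_mul_sub_log_sum_exp_mul_le [Fintype ι] {η : ℝ} (hη : 0 < η) {w a : ι → ℝ}
    (hw : ∀ i, 0 < w i) (hw1 : ∑ i, w i = 1) (ha : ∀ i, 0 < a i) (u : ι → ℝ) :
    ∑ i, u i * w i - η * log (∑ i, exp (u i / η) * a i) ≤ η * ∑ i, w i * log (w i / a i) := by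
  set x : ι → ℝ := fun i => exp (u i / η) / (w i / a i)
  have hx : ∀ i, 0 < x i := fun i => div_pos (exp_pos _) (div_pos (hw i) (ha i))
  have jensen : ∑ i, w i * log (x i) ≤ log (∑ i, w i * x i) := by
    simpa only [smul_eq_mul] using strictConcaveOn_log_Ioi.concaveOn.le_map_sum
      (fun i _ => (hw i).le) hw1 (fun i _ => hx i)
  have hwx : ∀ i, w i * x i = exp (u i / η) * a i := fun i => by
    simp only [x]; field_simp [(hw i).ne', (ha i).ne']
  have hlogx : ∀ i, log (x i) = u i / η - log (w i / a i) := fun i => by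
    rw [log_div (exp_pos _).ne' (div_pos (hw i) (ha i)).ne', log_exp]
  simp only [hwx, hlogx] at jensen
  have key : η * ∑ i, w i * (u i / η - log (w i / a i)) =
      ∑ i, u i * w i - η * ∑ i, w i * log (w i / a i) := by
    rw [mul_sum, mul_sum, ← sum_sub_distrib]
    refine sum_congr rfl fun i _ => ?_
    field_simp
  linarith [mul_le_mul_of_nonneg_left jensen hη.le]

noncomputable section

namespace EntropicOT

variable [Fintype κ]

def rowUpdate (η : ℝ) (C : ι → κ → ℝ) (r : ι → ℝ) (ψ : κ → ℝ) (i : ι) : ℝ :=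
  η * log (r i / ∑ j, exp ((ψ j - C i j) / η))

def smoothMax (η : ℝ) (ψ : κ → ℝ) : ℝ :=
  η * log (∑ j, exp (ψ j / η))

variable {η : ℝ} {C : ι → κ → ℝ} {r : ι → ℝ} {c : κ → ℝ}

theorem smoothMax_sub_smoothMax [Nonempty κ] (hη : η ≠ 0) (ψ : κ → ℝ) :
    smoothMax η (fun j => ψ j - smoothMax η ψ) = 0 := by
  have hS : 0 < ∑ j, exp (ψ j / η) := sum_pos (fun j _ => exp_pos _) univ_nonempty
  have hexp : ∀ j, exp ((ψ j - smoothMax η ψ) / η) = exp (ψ j / η) / ∑ j, exp (ψ j / η) := by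
    intro j
    rw [sub_div, exp_sub, smoothMax, mul_div_cancel_left₀ _ hη, exp_log hS]
  change η * log (∑ j, exp ((ψ j - smoothMax η ψ) / η)) = 0
  rw [sum_congr rfl fun j _ => hexp j, ← sum_div, div_self hS.ne', log_one, mul_zero]

theorem rowUpdate_mem_Icc [Nonempty κ] {M : ℝ} (hη : 0 < η) (hC0 : ∀ i j, 0 ≤ C i j)
    (hCM : ∀ i j, C i j ≤ M) {i : ι} (hr : 0 < r i) (ψ : κ → ℝ) :
    η * log (r i) - smoothMax η ψ ≤ rowUpdate η C r ψ i ∧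
      rowUpdate η C r ψ i ≤ η * log (r i) - smoothMax η ψ + M := by
  set S := ∑ j, exp (ψ j / η)
  set A := ∑ j, exp ((ψ j - C i j) / η)
  have hS : 0 < S := sum_pos (fun j _ => exp_pos _) univ_nonempty
  have hA : 0 < A := sum_pos (fun j _ => exp_pos _) univ_nonempty
  have hAS : A ≤ S := sum_le_sum fun j _ => exp_le_exp.mpr <|
    div_le_div_of_nonneg_right (by linarith [hC0 i j]) hη.le
  have hSA : exp (-M / η) * S ≤ A := by
    rw [mul_sum]
    refine sum_le_sum fun j _ => ?_
    rw [← exp_add, ← add_div]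
    exact exp_le_exp.mpr <| div_le_div_of_nonneg_right (by linarith [hCM i j]) hη.le
  have hlogA : log S - M / η ≤ log A := by
    have := log_le_log (by positivity) hSA
    rwa [log_mul (exp_pos _).ne' hS.ne', log_exp, neg_div, neg_add_eq_sub] at this
  have hrow : rowUpdate η C r ψ i = η * log (r i) - η * log A := by
    rw [rowUpdate, log_div hr.ne' hA.ne', mul_sub]
  have hmax : smoothMax η ψ = η * log S := rfl
  have hscaled : η * (log S - M / η) = smoothMax η ψ - M := by
    rw [hmax, mul_sub, mul_div_cancel₀ _ hη.ne']
  rw [hrow]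
  constructor
  · linarith [mul_le_mul_of_nonneg_left (log_le_log hA hAS) hη.le]
  · linarith [mul_le_mul_of_nonneg_left hlogA hη.le]

theorem smoothMax_mem_Icc {M : ℝ} (hη : 0 < η) (hc : ∀ j, 0 < c j) (hc1 : ∑ j, c j = 1)
    {ψ : κ → ℝ} (hψ : ∀ j, η * log (c j) ≤ ψ j ∧ ψ j ≤ η * log (c j) + M) :
    0 ≤ smoothMax η ψ ∧ smoothMax η ψ ≤ M := by
  have hlow : ∀ j, c j ≤ exp (ψ j / η) := fun j => calc
    c j = exp (η * log (c j) / η) := by rw [mul_div_cancel_left₀ _ hη.ne', exp_log (hc j)]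
    _ ≤ exp (ψ j / η) := exp_le_exp.mpr (div_le_div_of_nonneg_right (hψ j).1 hη.le)
  have hup : ∀ j, exp (ψ j / η) ≤ c j * exp (M / η) := fun j => calc
    exp (ψ j / η) ≤ exp ((η * log (c j) + M) / η) :=
      exp_le_exp.mpr (div_le_div_of_nonneg_right (hψ j).2 hη.le)
    _ = c j * exp (M / η) := by rw [add_div, mul_div_cancel_left₀ _ hη.ne', exp_add, exp_log (hc j)]
  have hS1 : 1 ≤ ∑ j, exp (ψ j / η) := hc1 ▸ sum_le_sum fun j _ => hlow j
  have hSM : ∑ j, exp (ψ j / η) ≤ exp (M / η) := by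
    simpa only [← sum_mul, hc1, one_mul] using sum_le_sum fun j (_ : j ∈ univ) => hup j
  constructor
  · exact mul_nonneg hη.le (log_nonneg hS1)
  · calc smoothMax η ψ ≤ η * log (exp (M / η)) :=
          mul_le_mul_of_nonneg_left (log_le_log (by linarith) hSM) hη.le
      _ = M := by rw [log_exp, mul_div_cancel₀ _ hη.ne']

variable [Fintype ι]

def dual (η : ℝ) (C : ι → κ → ℝ) (r : ι → ℝ) (c : κ → ℝ) (φ : ι → ℝ) (ψ : κ → ℝ) : ℝ :=
  ∑ i, φ i * r i + ∑ j, ψ j * c j - η * log (∑ i, ∑ j, exp (-(C i j - φ i - ψ j) / η))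

theorem dual_transpose (φ : ι → ℝ) (ψ : κ → ℝ) :
    dual η C r c φ ψ = dual η (fun j i => C i j) c r ψ φ := by
  unfold dual
  rw [sum_comm]
  simp only [sub_sub, add_comm (φ _)]
  ring

theorem dual_shift (hr1 : ∑ i, r i = 1) (hc1 : ∑ j, c j = 1) (φ : ι → ℝ) (ψ : κ → ℝ) (t : ℝ) :
    dual η C r c (fun i => φ i + t) (fun j => ψ j - t) = dual η C r c φ ψ := by
  have hcancel : ∀ i j, C i j - (φ i + t) - (ψ j - t) = C i j - φ i - ψ j := fun _ _ => by ring
  simp only [dual, hcancel, add_mul, sub_mul, sum_add_distrib, sum_sub_distrib, ← mul_sum, hr1, hc1]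
  ring

theorem sum_sum_exp_eq (φ : ι → ℝ) (ψ : κ → ℝ) :
    ∑ i, ∑ j, exp (-(C i j - φ i - ψ j) / η) =
      ∑ i, exp (φ i / η) * ∑ j, exp ((ψ j - C i j) / η) := by
  simp only [mul_sum, ← exp_add]
  congr! 3
  ring

theorem dual_le_dual_rowUpdate [Nonempty κ] (hη : 0 < η) (hr : ∀ i, 0 < r i) (hr1 : ∑ i, r i = 1)
    (φ : ι → ℝ) (ψ : κ → ℝ) : dual η C r c φ ψ ≤ dual η C r c (rowUpdate η C r ψ) ψ := by
  set A : ι → ℝ := fun i => ∑ j, exp ((ψ j - C i j) / η)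
  have hA : ∀ i, 0 < A i := fun i => sum_pos (fun j _ => exp_pos _) univ_nonempty
  have hupdate : ∀ i, rowUpdate η C r ψ i = η * log (r i / A i) := fun i => rfl
  have hnormalized : ∑ i, exp (rowUpdate η C r ψ i / η) * A i = 1 := by
    simp only [hupdate, mul_div_cancel_left₀ _ hη.ne', exp_log (div_pos (hr _) (hA _)),
      div_mul_cancel₀ _ (hA _).ne', hr1]
  have hvalue : ∑ i, rowUpdate η C r ψ i * r i = η * ∑ i, r i * log (r i / A i) := by
    rw [mul_sum]
    exact sum_congr rfl fun i _ => by rw [hupdate]; ring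
  have gibbs := sum_mul_sub_log_sum_exp_mul_le hη hr hr1 hA φ
  rw [dual, dual, sum_sum_exp_eq, sum_sum_exp_eq, hnormalized, log_one, mul_zero, sub_zero,
    hvalue]
  linarith

theorem dual_le_dual_colUpdate [Nonempty ι] (hη : 0 < η) (hc : ∀ j, 0 < c j)
    (hc1 : ∑ j, c j = 1) (φ : ι → ℝ) (ψ : κ → ℝ) :
    dual η C r c φ ψ ≤ dual η C r c φ (rowUpdate η (fun j i => C i j) c φ) := by
  rw [dual_transpose, dual_transpose φ]
  exact dual_le_dual_rowUpdate hη hc hc1 ψ φ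

theorem exists_dual_le_of_abs_le [Nonempty ι] [Nonempty κ] {M : ℝ} (hη : 0 < η)
    (hC0 : ∀ i j, 0 ≤ C i j) (hCM : ∀ i j, C i j ≤ M)
    (hr : ∀ i, 0 < r i) (hr1 : ∑ i, r i = 1) (hc : ∀ j, 0 < c j) (hc1 : ∑ j, c j = 1)
    (φ : ι → ℝ) (ψ : κ → ℝ) :
    ∃ φ' ψ', dual η C r c φ ψ ≤ dual η C r c φ' ψ' ∧
      (∀ i, |φ' i| ≤ M - η * log (r i)) ∧ (∀ j, |ψ' j| ≤ M - η * log (c j)) := by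
  set t := smoothMax η ψ
  set φ' := rowUpdate η C r (fun j => ψ j - t)
  set ψ' := rowUpdate η (fun j i => C i j) c φ'
  have ht : smoothMax η (fun j => ψ j - t) = 0 := smoothMax_sub_smoothMax hη.ne' ψ
  have hφ' : ∀ i, η * log (r i) ≤ φ' i ∧ φ' i ≤ η * log (r i) + M := fun i => by
    simpa only [ht, sub_zero] using
      rowUpdate_mem_Icc hη hC0 hCM (hr i) (fun j => ψ j - t)
  have hψ' : ∀ j, η * log (c j) - smoothMax η φ' ≤ ψ' j ∧
      ψ' j ≤ η * log (c j) - smoothMax η φ' + M := fun j =>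
    rowUpdate_mem_Icc hη (fun j i => hC0 i j) (fun j i => hCM i j) (hc j) φ'
  have hM : 0 ≤ M := (hC0 (Classical.arbitrary ι) (Classical.arbitrary κ)).trans (hCM _ _)
  refine ⟨φ', ψ', ?_, fun i => ?_, fun j => ?_⟩
  · calc dual η C r c φ ψ = dual η C r c (fun i => φ i + t) (fun j => ψ j - t) :=
          (dual_shift hr1 hc1 φ ψ t).symm
      _ ≤ dual η C r c φ' (fun j => ψ j - t) := dual_le_dual_rowUpdate hη hr hr1 _ _
      _ ≤ dual η C r c φ' ψ' := dual_le_dual_colUpdate hη hc hc1 _ _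
  · exact abs_le_sub_of_mem_Icc (mul_log_nonpos_of_sum_eq_one hη hr hr1 i) ⟨le_rfl, hM⟩
      (by simpa only [sub_zero] using hφ' i)
  · exact abs_le_sub_of_mem_Icc (mul_log_nonpos_of_sum_eq_one hη hc hc1 j)
      (smoothMax_mem_Icc hη hr hr1 hφ') (hψ' j)

theorem continuous_dual [Nonempty ι] [Nonempty κ] :
    Continuous fun p : (ι → ℝ) × (κ → ℝ) => dual η C r c p.1 p.2 := by
  refine Continuous.sub (by fun_prop) (continuous_const.mul (Continuous.log (by fun_prop) ?_))
  exact fun p => (sum_pos (fun i _ => sum_pos (fun j _ => exp_pos _) univ_nonempty)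
    univ_nonempty).ne'

end EntropicOT

end

open EntropicOT

/-- There exists an optimal solution to the entropic OT dual whose potentials
satisfy ‖φ‖_∞ ≤ ‖C‖_∞ − η log(min r) and ‖ψ‖_∞ ≤ ‖C‖_∞ − η log(min c). -/
theorem stmt_12 (n : ℕ) (hn : 0 < n) (η : ℝ) (hη : 0 < η)
    (C : Fin n → Fin n → ℝ) (hC : ∀ i j, 0 ≤ C i j)
    (Cinf : ℝ) (hCinf : IsGreatest (Set.range fun p : Fin n × Fin n => |C p.1 p.2|) Cinf)
    (r c : Fin n → ℝ) (hr0 : ∀ i, 0 < r i) (hr1 : ∑ i, r i = 1)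
    (hc0 : ∀ j, 0 < c j) (hc1 : ∑ j, c j = 1)
    (rmin cmin : ℝ) (hrmin : IsLeast (Set.range r) rmin) (hcmin : IsLeast (Set.range c) cmin)
    (d : (Fin n → ℝ) → (Fin n → ℝ) → ℝ)
    (hd : ∀ φ ψ, d φ ψ = (∑ i, φ i * r i) + (∑ j, ψ j * c j) -
      η * Real.log (∑ i, ∑ j, Real.exp (-(C i j - φ i - ψ j) / η))) :
    ∃ φ ψ : Fin n → ℝ,
      (∀ φ' ψ' : Fin n → ℝ, d φ' ψ' ≤ d φ ψ) ∧
      (∀ i, |φ i| ≤ Cinf - η * Real.log rmin) ∧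
      (∀ j, |ψ j| ≤ Cinf - η * Real.log cmin) := by
  have : Nonempty (Fin n) := ⟨⟨0, hn⟩⟩
  obtain rfl : d = dual η C r c := funext₂ hd
  have hCle : ∀ i j, C i j ≤ Cinf := fun i j => (le_abs_self _).trans (hCinf.2 ⟨(i, j), rfl⟩)
  have hbound : ∀ {w : Fin n → ℝ} {wmin : ℝ}, (∀ i, 0 < w i) → IsLeast (Set.range w) wmin →
      ∀ i, Cinf - η * log (w i) ≤ Cinf - η * log wmin := by
    rintro w wmin hw ⟨⟨i₀, rfl⟩, hle⟩ i
    exact sub_le_sub_left (mul_le_mul_of_nonneg_left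
      (log_le_log (hw i₀) (hle ⟨i, rfl⟩)) hη.le) _
  set K := {φ : Fin n → ℝ | ∀ i, |φ i| ≤ Cinf - η * log rmin} ×ˢ
    {ψ : Fin n → ℝ | ∀ j, |ψ j| ≤ Cinf - η * log cmin}
  have himprove : ∀ φ' ψ', ∃ p ∈ K, dual η C r c φ' ψ' ≤ dual η C r c p.1 p.2 := by
    intro φ' ψ'
    obtain ⟨φ, ψ, hle, hφ, hψ⟩ := exists_dual_le_of_abs_le hη hC hCle hr0 hr1 hc0 hc1 φ' ψ'
    exact ⟨(φ, ψ), ⟨fun i => (hφ i).trans (hbound hr0 hrmin i),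
      fun j => (hψ j).trans (hbound hc0 hcmin j)⟩, hle⟩
  have hK : IsCompact K := (isCompact_setOf_forall_abs_le _).prod (isCompact_setOf_forall_abs_le _)
  obtain ⟨p₀, hp₀, -⟩ := himprove 0 0
  obtain ⟨⟨φ, ψ⟩, ⟨hφ, hψ⟩, hmax⟩ := hK.exists_isMaxOn ⟨p₀, hp₀⟩ continuous_dual.continuousOn
  refine ⟨φ, ψ, fun φ' ψ' => ?_, hφ, hψ⟩
  obtain ⟨p, hp, hle⟩ := himprove φ' ψ'
  exact hle.trans (hmax hp)
end

section
/- Consider iterates initialized as p⁰_{ij} = 1/n, ν⁰ = (1/2, 1/2)^n, s₀ = 0, evolving by log p^{t+1}_{ij} = (1 − τη) log p^t_{ij} − τ(C_{ij} + 2‖C‖_∞(μ̄^{t+1}_{+,j} − μ̄^{t+1}_{-,j})) − log Z^{t+1}_i (rowwise normalized), ν^{t+1} = (1 − τη) ν^t + τη μ̄^{t+1}, and s_{t+1} = (1 − τη)s_t + τη. Then for all t ≥ 0, p^t equals the rowwise Gibbs matrix p_{s_t}(ν^t) defined by p_s(ν)_{ij} = exp(−(s C_{ij} + 2‖C‖_∞(ν_{+,j}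 − ν_{-,j}))/η)/Z_{s,i}(ν) with Z_{s,i}(ν) = ∑_j exp(−(s C_{ij} + 2‖C‖_∞(ν_{+,j} − ν_{-,j}))/η). -/
/-- Dual representation of the primal extragradient iterates: the multiplicative
mirror-descent primal update corresponds exactly to the convex-combination
update of the dual pair (s_t, ν^t), so p^t = p_{s_t}(ν^t) for all t. -/
theorem stmt_19 (n : ℕ) (hn : 0 < n) (η τ : ℝ) (hη : 0 < η) (hτ : 0 < τ)
    (hτη0 : 0 < τ * η) (hτη1 : τ * η < 1)
    (C : Fin n → Fin n → ℝ) (hC : ∀ i j, 0 ≤ C i j)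
    (Cinf : ℝ) (hCinf : IsGreatest (Set.range fun pr : Fin n × Fin n => |C pr.1 pr.2|) Cinf)
    (μbarp μbarm : ℕ → Fin n → ℝ)
    (hμbar0 : ∀ t j, 0 ≤ μbarp t j) (hμbar0' : ∀ t j, 0 ≤ μbarm t j)
    (hμbar1 : ∀ t j, μbarp t j + μbarm t j = 1)
    (s : ℕ → ℝ) (hs0 : s 0 = 0)
    (hsrec : ∀ t, s (t + 1) = (1 - τ * η) * s t + τ * η)
    (νp νm : ℕ → Fin n → ℝ)
    (hν0 : ∀ j, νp 0 j = 1 / 2) (hν0' : ∀ j, νm 0 j = 1 / 2)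
    (hνrec : ∀ t j, νp (t + 1) j = (1 - τ * η) * νp t j + τ * η * μbarp (t + 1) j)
    (hνrec' : ∀ t j, νm (t + 1) j = (1 - τ * η) * νm t j + τ * η * μbarm (t + 1) j)
    (p : ℕ → Fin n → Fin n → ℝ)
    (hp0 : ∀ i j, p 0 i j = 1 / (n : ℝ))
    (hprec : ∀ t i j, p (t + 1) i j =
      Real.exp ((1 - τ * η) * Real.log (p t i j)
        - τ * (C i j + 2 * Cinf * (μbarp (t + 1) j - μbarm (t + 1) j))) /
      ∑ j', Real.exp ((1 - τ * η) * Real.log (p t i j')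
        - τ * (C i j' + 2 * Cinf * (μbarp (t + 1) j' - μbarm (t + 1) j')))) :
    ∀ t i j, p t i j =
      Real.exp (-(s t * C i j + 2 * Cinf * (νp t j - νm t j)) / η) /
      ∑ j', Real.exp (-(s t * C i j' + 2 * Cinf * (νp t j' - νm t j')) / η) := by
  intro t
  induction t with
  | zero =>
    intro i j
    have h0 : ∀ j' : Fin n,
        -(s 0 * C i j' + 2 * Cinf * (νp 0 j' - νm 0 j')) / η = 0 := by
      intro j'; rw [hs0, hν0, hν0']; ring
    simp only [h0, Real.exp_zero, Finset.sum_const, Finset.card_univ, Fintype.card_fin,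
      nsmul_eq_mul, mul_one, hp0]
  | succ t ih =>
    intro i j
    rw [hprec]
    set Z := ∑ j', Real.exp (-(s t * C i j' + 2 * Cinf * (νp t j' - νm t j')) / η) with hZdef
    have hZ : 0 < Z :=
      Finset.sum_pos (fun _ _ => Real.exp_pos _) (Finset.univ_nonempty_iff.2 ⟨⟨0, hn⟩⟩)
    have hlog : ∀ j' : Fin n, Real.log (p t i j') =
        -(s t * C i j' + 2 * Cinf * (νp t j' - νm t j')) / η - Real.log Z := by
      intro j'
      rw [ih i j', Real.log_div (Real.exp_ne_zero _) hZ.ne', Real.log_exp]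
    have key : ∀ j' : Fin n,
        (1 - τ * η) * Real.log (p t i j')
          - τ * (C i j' + 2 * Cinf * (μbarp (t + 1) j' - μbarm (t + 1) j'))
        = -(s (t + 1) * C i j' + 2 * Cinf * (νp (t + 1) j' - νm (t + 1) j')) / η
          + -((1 - τ * η) * Real.log Z) := by
      intro j'
      rw [hlog, hsrec, hνrec, hνrec']
      field_simp
      ring
    simp only [key, Real.exp_add]
    rw [← Finset.sum_mul,
      mul_div_mul_right _ _ (Real.exp_ne_zero (-((1 - τ * η) * Real.log Z)))]
end
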